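/- Let ε(ξ) = φ(ξ)/Φ(ξ) be the inverse Mills ratio. Then lim_{ξ→−∞} (ε(ξ) + ξ) = 0. -/

import Mathlib

/-!
For `x < 0` the Mills ratio is squeezed between the classical bounds
`-x / (x ^ 2 + 1) * φ x ≤ Φ x ≤ φ x / (-x)`, so that `-x ≤ φ x / Φ x ≤ -x - 1 / x`.
Both bounds come from integrating a derivative over `(-∞, x]`: the upper one from `φ' t = -t φ t`
and `-x ≤ -t` for `t ≤ x`, the lower one from `g t = -t / (t ^ 2 + 1) * φ t`, whose derivative
`(1 - 2 / (t ^ 2 + 1) ^ 2) φ t` is at most `φ t`.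
-/

open MeasureTheory Real Filter Set

noncomputable def stdNormalPDF (x : ℝ) : ℝ := Real.exp (-x ^ 2 / 2) / Real.sqrt (2 * Real.pi)

noncomputable def stdNormalCDF (x : ℝ) : ℝ := ∫ t in Set.Iic x, stdNormalPDF t

lemma setIntegral_Iic_eq_of_hasDerivAt {f f' : ℝ → ℝ} (hf : ∀ t, HasDerivAt f (f' t) t)
    (hf' : Integrable f') (hlim : Tendsto f atBot (nhds 0)) (x : ℝ) :
    ∫ t in Iic x, f' t = f x := by
  simpa using integral_Iic_of_hasDerivAt_of_tendsto' (fun t _ => hf t) hf'.integrableOn hlim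

lemma stdNormalPDF_pos (x : ℝ) : 0 < stdNormalPDF x := by
  unfold stdNormalPDF
  positivity

lemma stdNormalPDF_eq_exp_mul :
    stdNormalPDF = fun x => Real.exp (-2⁻¹ * x ^ 2) * (Real.sqrt (2 * Real.pi))⁻¹ := by
  funext x
  rw [stdNormalPDF, div_eq_mul_inv]
  ring_nf

@[fun_prop]
lemma continuous_stdNormalPDF : Continuous stdNormalPDF := by
  unfold stdNormalPDF
  fun_prop

lemma integrable_stdNormalPDF : Integrable stdNormalPDF := by
  rw [stdNormalPDF_eq_exp_mul]
  exact (integrable_exp_neg_mul_sq (by norm_num : (0 : ℝ) < 2⁻¹)).mul_const _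

lemma integrable_neg_mul_stdNormalPDF : Integrable fun t => -t * stdNormalPDF t := by
  rw [stdNormalPDF_eq_exp_mul]
  convert (integrable_mul_exp_neg_mul_sq (by norm_num : (0 : ℝ) < 2⁻¹)).mul_const
    (-(Real.sqrt (2 * Real.pi))⁻¹) using 1
  funext t
  ring

lemma tendsto_stdNormalPDF_atBot : Tendsto stdNormalPDF atBot (nhds 0) := by
  have hsq : Tendsto (fun x : ℝ => -x ^ 2 / 2) atBot atBot :=
    (tendsto_neg_atTop_atBot.comp
      ((tendsto_pow_atTop two_ne_zero).comp tendsto_neg_atBot_atTop)).atBot_div_const two_pos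
      |>.congr fun x => by simp
  unfold stdNormalPDF
  simpa using (tendsto_exp_atBot.comp hsq).div_const (Real.sqrt (2 * Real.pi))

lemma hasDerivAt_stdNormalPDF (x : ℝ) : HasDerivAt stdNormalPDF (-x * stdNormalPDF x) x := by
  have hsq : HasDerivAt (fun x : ℝ => -x ^ 2 / 2) (-x) x :=
    ((hasDerivAt_pow 2 x).neg.div_const 2).congr_deriv (by ring)
  refine (hsq.exp.div_const (Real.sqrt (2 * Real.pi))).congr_deriv ?_
  rw [stdNormalPDF]
  ring

lemma setIntegral_Iic_neg_mul_stdNormalPDF (x : ℝ) :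
    ∫ t in Iic x, -t * stdNormalPDF t = stdNormalPDF x :=
  setIntegral_Iic_eq_of_hasDerivAt hasDerivAt_stdNormalPDF
    integrable_neg_mul_stdNormalPDF tendsto_stdNormalPDF_atBot x

lemma neg_mul_stdNormalCDF_le (x : ℝ) : -x * stdNormalCDF x ≤ stdNormalPDF x := by
  rw [← setIntegral_Iic_neg_mul_stdNormalPDF x, stdNormalCDF, ← integral_const_mul]
  refine setIntegral_mono_on (integrable_stdNormalPDF.integrableOn.const_mul _)
    integrable_neg_mul_stdNormalPDF.integrableOn
    measurableSet_Iic fun t ht => ?_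
  exact mul_le_mul_of_nonneg_right (neg_le_neg ht) (stdNormalPDF_pos t).le

lemma hasDerivAt_neg_div_sq_add_one_mul_stdNormalPDF (t : ℝ) :
    HasDerivAt (fun t => -t / (t ^ 2 + 1) * stdNormalPDF t)
      ((1 - 2 / (t ^ 2 + 1) ^ 2) * stdNormalPDF t) t := by
  have hden : t ^ 2 + 1 ≠ 0 := by positivity
  have hquot : HasDerivAt (fun t : ℝ => -t / (t ^ 2 + 1)) ((t ^ 2 - 1) / (t ^ 2 + 1) ^ 2) t := by
    refine ((hasDerivAt_neg' t).div ((hasDerivAt_pow 2 t).add_const 1) hden).congr_deriv ?_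
    field_simp
    ring
  refine (hquot.mul (hasDerivAt_stdNormalPDF t)).congr_deriv ?_
  field_simp
  ring

lemma abs_one_sub_two_div_sq_add_one_sq_le_one (t : ℝ) : |1 - 2 / (t ^ 2 + 1) ^ 2| ≤ 1 := by
  have hpos : 0 < (t ^ 2 + 1) ^ 2 := by positivity
  have hle : 2 / (t ^ 2 + 1) ^ 2 ≤ 2 :=
    div_le_self zero_le_two (one_le_pow₀ (by nlinarith [sq_nonneg t]))
  rw [abs_le]
  constructor <;> linarith [div_pos two_pos hpos]

lemma integrable_one_sub_two_div_sq_add_one_sq_mul_stdNormalPDF :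
    Integrable fun t => (1 - 2 / (t ^ 2 + 1) ^ 2) * stdNormalPDF t := by
  refine integrable_stdNormalPDF.mono (Measurable.aestronglyMeasurable (by fun_prop)) ?_
  filter_upwards with t
  rw [norm_mul, Real.norm_eq_abs]
  exact mul_le_of_le_one_left (norm_nonneg _) (abs_one_sub_two_div_sq_add_one_sq_le_one t)

lemma tendsto_neg_div_sq_add_one_mul_stdNormalPDF_atBot :
    Tendsto (fun t => -t / (t ^ 2 + 1) * stdNormalPDF t) atBot (nhds 0) := by
  refine tendsto_of_tendsto_of_tendsto_of_le_of_le' tendsto_const_nhds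
    tendsto_stdNormalPDF_atBot ?_ (Eventually.of_forall fun t => ?_)
  · filter_upwards [eventually_le_atBot 0] with t ht
    exact mul_nonneg (div_nonneg (neg_nonneg.2 ht) (by positivity)) (stdNormalPDF_pos t).le
  · refine mul_le_of_le_one_left (stdNormalPDF_pos t).le ((div_le_one (by positivity)).2 ?_)
    nlinarith [sq_nonneg (t + 1)]

lemma neg_div_sq_add_one_mul_stdNormalPDF_le_stdNormalCDF (x : ℝ) :
    -x / (x ^ 2 + 1) * stdNormalPDF x ≤ stdNormalCDF x := by
  rw [← setIntegral_Iic_eq_of_hasDerivAt hasDerivAt_neg_div_sq_add_one_mul_stdNormalPDF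
    integrable_one_sub_two_div_sq_add_one_sq_mul_stdNormalPDF
    tendsto_neg_div_sq_add_one_mul_stdNormalPDF_atBot x, stdNormalCDF]
  refine setIntegral_mono integrable_one_sub_two_div_sq_add_one_sq_mul_stdNormalPDF.integrableOn
    integrable_stdNormalPDF.integrableOn fun t => ?_
  exact mul_le_of_le_one_left (stdNormalPDF_pos t).le
    (sub_le_self _ (div_nonneg zero_le_two (by positivity)))

lemma stdNormalCDF_pos_of_neg {x : ℝ} (hx : x < 0) : 0 < stdNormalCDF x :=
  (mul_pos (div_pos (neg_pos.2 hx) (by positivity)) (stdNormalPDF_pos x)).trans_le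
    (neg_div_sq_add_one_mul_stdNormalPDF_le_stdNormalCDF x)

lemma neg_le_stdNormalPDF_div_stdNormalCDF {x : ℝ} (hx : x < 0) :
    -x ≤ stdNormalPDF x / stdNormalCDF x :=
  (le_div_iff₀ (stdNormalCDF_pos_of_neg hx)).2 (neg_mul_stdNormalCDF_le x)

lemma stdNormalPDF_div_stdNormalCDF_le {x : ℝ} (hx : x < 0) :
    stdNormalPDF x / stdNormalCDF x ≤ -x - x⁻¹ := by
  have hlow_pos : 0 < -x / (x ^ 2 + 1) * stdNormalPDF x :=
    mul_pos (div_pos (neg_pos.2 hx) (by positivity)) (stdNormalPDF_pos x)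
  calc stdNormalPDF x / stdNormalCDF x
      ≤ stdNormalPDF x / (-x / (x ^ 2 + 1) * stdNormalPDF x) :=
        div_le_div_of_nonneg_left (stdNormalPDF_pos x).le hlow_pos
          (neg_div_sq_add_one_mul_stdNormalPDF_le_stdNormalCDF x)
    _ = -x - x⁻¹ := by
        field_simp [hx.ne, (stdNormalPDF_pos x).ne']
        ring

/-- `lim_{ξ→−∞} (φ(ξ)/Φ(ξ) + ξ) = 0`. -/
theorem stmt_3 :
    Tendsto (fun ξ : ℝ => stdNormalPDF ξ / stdNormalCDF ξ + ξ) atBot (nhds 0) := by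
  have hupper : Tendsto (fun ξ : ℝ => -ξ⁻¹) atBot (nhds 0) := by
    simpa using (tendsto_inv_atBot_zero (𝕜 := ℝ)).neg
  refine tendsto_of_tendsto_of_tendsto_of_le_of_le' tendsto_const_nhds hupper ?_ ?_
  · filter_upwards [eventually_lt_atBot 0] with ξ hξ
    linarith [neg_le_stdNormalPDF_div_stdNormalCDF hξ]
  · filter_upwards [eventually_lt_atBot 0] with ξ hξ
    linarith [stdNormalPDF_div_stdNormalCDF_le hξ]
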